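/- arXiv:math/0609253 — 4 statements merged into one kernel-verified Lean document; each statement's English description precedes it below -/
import Mathlib

section
/- Let p be a prime number and K a field of characteristic 0 or p. For i = 1, …, n let f_i ∈ K[x₁, …, x_n] be a polynomial lying in K[x₁^p, …, x_{i−1}^p, x_i, x_{i+1}^p, …, x_n^p] but not in K[x₁^p, x₂^p, …, x_n^p]. Then the Jacobian determinant det(∂f_i/∂x_j) is a non-zero polynomial; in particular f₁, …, f_n are algebraically independent over K. -/
/-!
Multiplying the Jacobian matrix on the right by `diag(x₁, …, xₙ)` replaces each `∂ⱼ` by the Euler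
operator `xⱼ ∂ⱼ`, which scales the monomial `xᵐ` by `mⱼ`. Fix a monomial order and let `aᵢ` be the
largest exponent of `fᵢ` whose `i`-th entry is prime to `p`. Since the exponents of `fₖ` are
divisible by `p` off the `k`-th coordinate, reducing mod `p` shows that whenever
`a₁ + ⋯ + aₙ = d₁ + ⋯ + dₙ` with each `dₖ` an exponent of `fₖ`, every `dₖ` has its `k`-th entry
prime to `p`; hence `dₖ ≤ aₖ`, and equality of the sums forces `dₖ = aₖ`. So the coefficient of
`x^(a₁ + ⋯ + aₙ)` in `det (xⱼ ∂fᵢ/∂xⱼ)` is `∏ᵢ coeff_{aᵢ}(fᵢ) · det (aᵢⱼ)`, and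
`det (aᵢⱼ) ≡ ∏ᵢ aᵢᵢ ≢ 0 (mod p)` does not vanish in `K`.

Algebraic independence is the Jacobian criterion. Over a perfect field, if `P(f) = 0` then by the
chain rule the vector `((∂ₖP)(f))ₖ` is killed by the invertible Jacobian, so each `∂ₖP` is a
relation of smaller degree. For a relation of minimal degree all `∂ₖP` vanish, so `P` is a
constant (characteristic `0`) or a `q`-th power of a smaller relation (characteristic `q`).
The general case follows by passing to the algebraic closure.
-/

open MvPolynomial

theorem Derivation.map_mvPolynomial_aeval {σ R A M : Type*} [Fintype σ] [CommSemiring R]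
    [CommSemiring A] [Algebra R A] [AddCommMonoid M] [Module A M] [Module R M]
    [IsScalarTower R A M] (D : Derivation R A M) (x : σ → A) (P : MvPolynomial σ R) :
    D (aeval x P) = ∑ k, aeval x (pderiv k P) • D (x k) := by
  classical
  induction P using MvPolynomial.induction_on with
  | C a => simp
  | add P Q hP hQ => simp [hP, hQ, add_smul, Finset.sum_add_distrib]
  | mul_X P i hP =>
    simp [add_smul, Finset.sum_add_distrib, mul_smul, hP, Pi.single_apply, apply_ite (aeval x),
      ite_smul, Finset.smul_sum, add_comm, mul_comm]

theorem Finsupp.dvd_sum_apply_iff {σ : Type*} [Fintype σ] {p : ℕ} {x : σ → σ →₀ ℕ} {j : σ}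
    (h : ∀ i ≠ j, p ∣ x i j) : p ∣ (∑ i, x i) j ↔ p ∣ x j j := by
  classical
  rw [Finsupp.finsetSum_apply, ← Finset.add_sum_erase _ _ (Finset.mem_univ j)]
  exact Nat.dvd_add_left (Finset.dvd_sum fun i hi => h i (Finset.ne_of_mem_erase hi))

theorem Matrix.det_of_natCast_ne_zero {σ K : Type*} [Fintype σ] [DecidableEq σ] [CommRing K]
    {p : ℕ} (hp : p.Prime) (hK : p ∣ ringChar K) (A : σ → σ → ℕ)
    (hoff : ∀ i j, i ≠ j → p ∣ A i j) (hdiag : ∀ i, ¬ p ∣ A i i) :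
    (Matrix.of fun i j => (A i j : K)).det ≠ 0 := by
  have := Fact.mk hp
  have hZ : (((Matrix.of fun i j => (A i j : ℤ)).det : ℤ) : ZMod p) ≠ 0 := by
    have hdiagonal : (Int.castRingHom (ZMod p)).mapMatrix (Matrix.of fun i j => (A i j : ℤ))
        = Matrix.diagonal fun i => (A i i : ZMod p) := by
      ext i j
      by_cases hij : i = j
      · simp [hij]
      · simp [hij, (ZMod.natCast_eq_zero_iff _ _).mpr (hoff i j hij)]
    rw [← eq_intCast (Int.castRingHom _), RingHom.map_det, hdiagonal, Matrix.det_diagonal]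
    exact Finset.prod_ne_zero_iff.mpr fun i _ => (ZMod.natCast_eq_zero_iff _ _).not.mpr (hdiag i)
  have hcast : (Matrix.of fun i j => (A i j : K))
      = (Int.castRingHom K).mapMatrix (Matrix.of fun i j => (A i j : ℤ)) := by
    ext i j
    simp
  rw [hcast, ← RingHom.map_det, eq_intCast, Ne, CharP.intCast_eq_zero_iff K (ringChar K)]
  exact fun hdvd => hZ ((ZMod.intCast_zmod_eq_zero_iff_dvd _ p).mpr
    ((Int.natCast_dvd_natCast.mpr hK).trans hdvd))

namespace MvPolynomial

variable {σ R : Type*} [CommRing R]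

theorem coeff_X_mul_pderiv (i : σ) (P : MvPolynomial σ R) (m : σ →₀ ℕ) :
    coeff m (X i * pderiv i P) = m i * coeff m P := by
  classical
  induction P using MvPolynomial.induction_on' with
  | monomial n c =>
    rw [X_mul_pderiv_monomial, coeff_smul, coeff_monomial, nsmul_eq_mul]
    split_ifs with h <;> simp [h]
  | add P Q hP hQ => simp only [map_add, mul_add, coeff_add, hP, hQ]

theorem support_X_mul_pderiv_subset (i : σ) (P : MvPolynomial σ R) :
    (X i * pderiv i P).support ⊆ P.support := by
  intro m hm
  rw [mem_support_iff, coeff_X_mul_pderiv] at hm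
  exact mem_support_iff.mpr (right_ne_zero_of_mul hm)

theorem coeff_sum_prod_of_unique {ι : Type*} [Fintype ι] {g : ι → MvPolynomial σ R}
    {a : ι → σ →₀ ℕ}
    (h : ∀ d : ι → σ →₀ ℕ, (∀ i, d i ∈ (g i).support) → ∑ i, d i = ∑ i, a i → d = a) :
    coeff (∑ i, a i) (∏ i, g i) = ∏ i, coeff (a i) (g i) := by
  classical
  conv_lhs => rw [← Finset.prod_congr rfl fun i _ => support_sum_monomial_coeff (g i)]
  simp_rw [Finset.prod_univ_sum, coeff_sum, ← monomial_sum_prod, coeff_monomial]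
  rw [Finset.sum_eq_single a]
  · simp
  · intro d hd hda
    rw [if_neg fun hs => hda (h d (by simpa using hd) hs)]
  · intro ha
    obtain ⟨i, hi⟩ : ∃ i, a i ∉ (g i).support := by simpa using ha
    rw [if_pos rfl, Finset.prod_eq_zero (Finset.mem_univ i) (notMem_support_iff.mp hi)]

variable (R) in
/-- `R[xⱼᵖ (j ∈ s), xⱼ (j ∉ s)]`, described through the exponents of its elements. -/
def exponentDvdSubalgebra (p : ℕ) (s : Set σ) : Subalgebra R (MvPolynomial σ R) where
  carrier := {P | ∀ m ∈ P.support, ∀ j ∈ s, p ∣ m j}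
  mul_mem' {P Q} hP hQ m hm j hj := by
    classical
    obtain ⟨u, hu, v, hv, rfl⟩ := Finset.mem_add.mp (support_mul P Q hm)
    exact dvd_add (hP u hu j hj) (hQ v hv j hj)
  add_mem' {P Q} hP hQ m hm j hj := by
    classical
    rcases Finset.mem_union.mp (support_add hm) with h | h
    exacts [hP m h j hj, hQ m h j hj]
  algebraMap_mem' c m hm j _ := by
    classical
    rw [algebraMap_eq, support_C] at hm
    split_ifs at hm <;> simp_all

theorem adjoin_X_union_X_pow_le (p : ℕ) (i : σ) :
    Algebra.adjoin R ({X i} ∪ {q : MvPolynomial σ R | ∃ j, j ≠ i ∧ q = X j ^ p})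
      ≤ exponentDvdSubalgebra R p {i}ᶜ := by
  classical
  rw [Algebra.adjoin_le_iff]
  rintro q (rfl | ⟨j, -, rfl⟩) m hm k hk
  · rw [Finset.mem_singleton.mp (support_monomial_subset hm)]
    simp [Ne.symm hk]
  · rw [X_pow_eq_monomial] at hm
    rw [Finset.mem_singleton.mp (support_monomial_subset hm)]
    by_cases hjk : j = k <;> simp [hjk]

theorem exponentDvdSubalgebra_univ_le (p : ℕ) :
    exponentDvdSubalgebra R p (Set.univ : Set σ)
      ≤ Algebra.adjoin R (Set.range fun j : σ => (X j : MvPolynomial σ R) ^ p) := by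
  intro P hP
  rw [← support_sum_monomial_coeff P]
  refine Subalgebra.sum_mem _ fun m hm => ?_
  rw [monomial_eq]
  refine Subalgebra.mul_mem _ (Subalgebra.algebraMap_mem _ _) (Subalgebra.prod_mem _ fun j _ => ?_)
  obtain ⟨k, hk⟩ := hP m hm j trivial
  change X j ^ m j ∈ _
  rw [hk, pow_mul]
  exact Subalgebra.pow_mem _ (Algebra.subset_adjoin (Set.mem_range_self j)) k

theorem exists_mem_support_not_dvd {p : ℕ} {i : σ} {P : MvPolynomial σ R}
    (hP : P ∈ exponentDvdSubalgebra R p {i}ᶜ) (hP' : P ∉ exponentDvdSubalgebra R p Set.univ) :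
    ∃ m ∈ P.support, ¬ p ∣ m i := by
  by_contra! h
  refine hP' fun m hm j _ => ?_
  by_cases hji : j = i
  · exact hji ▸ h m hm
  · exact hP m hm j hji

section Jacobian

variable [Fintype σ]

theorem exists_unique_sum_decomposition {p : ℕ} {f : σ → MvPolynomial σ R}
    (hf : ∀ i, f i ∈ exponentDvdSubalgebra R p {i}ᶜ)
    (hf' : ∀ i, f i ∉ exponentDvdSubalgebra R p Set.univ) :
    ∃ a : σ → σ →₀ ℕ, (∀ i, a i ∈ (f i).support) ∧ (∀ i, ¬ p ∣ a i i) ∧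
      ∀ d : σ → σ →₀ ℕ, (∀ i, d i ∈ (f i).support) → ∑ i, d i = ∑ i, a i → d = a := by
  classical
  obtain ⟨_, _⟩ := exists_wellFoundedGT σ
  let ord : MonomialOrder σ := .lex
  choose a ha hmax using fun i => Finset.exists_max_image
    ((f i).support.filter fun m => ¬ p ∣ m i) ord.toSyn
    (by simpa [Finset.Nonempty] using exists_mem_support_not_dvd (hf i) (hf' i))
  simp only [Finset.mem_filter, and_imp] at ha hmax
  refine ⟨a, fun i => (ha i).1, fun i => (ha i).2, fun d hd hsum => ?_⟩
  have hoff {x : σ → σ →₀ ℕ} (hx : ∀ i, x i ∈ (f i).support) (j : σ) : ∀ i ≠ j, p ∣ x i j :=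
    fun i hij => hf i (x i) (hx i) j (Ne.symm hij)
  have hdiag (j : σ) : ¬ p ∣ d j j := by
    rw [← Finsupp.dvd_sum_apply_iff (hoff hd j), hsum,
      Finsupp.dvd_sum_apply_iff (hoff (fun i => (ha i).1) j)]
    exact (ha j).2
  have hle : ∀ j ∈ Finset.univ, ord.toSyn (d j) ≤ ord.toSyn (a j) :=
    fun j _ => hmax j (d j) (hd j) (hdiag j)
  have heq := (Finset.sum_eq_sum_iff_of_le hle).mp (by simp only [← map_sum, hsum])
  funext j
  exact ord.toSyn.injective (heq j (Finset.mem_univ j))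

theorem coeff_sum_det_X_mul_pderiv [DecidableEq σ] {f : σ → MvPolynomial σ R}
    {a : σ → σ →₀ ℕ}
    (h : ∀ d : σ → σ →₀ ℕ, (∀ i, d i ∈ (f i).support) → ∑ i, d i = ∑ i, a i → d = a) :
    coeff (∑ i, a i) (Matrix.of fun i j => X j * pderiv j (f i)).det
      = (∏ i, coeff (a i) (f i)) * (Matrix.of fun i j => (a i j : R)).det := by
  rw [Matrix.det_apply', coeff_sum, Matrix.det_apply', Finset.mul_sum]
  refine Finset.sum_congr rfl fun π _ => ?_
  have hπ : coeff (∑ i, a i) (∏ i, X i * pderiv i (f (π i)))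
      = ∏ i, coeff (a (π i)) (X i * pderiv i (f (π i))) := by
    rw [← Equiv.sum_comp π a]
    refine coeff_sum_prod_of_unique fun d hd hsum => ?_
    funext i
    have hd' : ∀ j, (d ∘ π.symm) j ∈ (f j).support := fun j => by
      simpa using support_X_mul_pderiv_subset _ _ (hd (π.symm j))
    have hsum' : ∑ j, d (π.symm j) = ∑ j, a j := by
      rw [Equiv.sum_comp π.symm d, hsum, Equiv.sum_comp π a]
    simpa using congrFun (h _ hd' hsum') (π i)
  simp only [Matrix.of_apply]
  rw [← map_intCast (C : R →+* MvPolynomial σ R), coeff_C_mul, hπ]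
  simp only [coeff_X_mul_pderiv, Finset.prod_mul_distrib,
    Equiv.prod_comp π fun k => coeff (a k) (f k)]
  ring

theorem det_jacobian_ne_zero [DecidableEq σ] [IsDomain R] {p : ℕ} (hp : p.Prime)
    (hR : p ∣ ringChar R) {f : σ → MvPolynomial σ R}
    (hf : ∀ i, f i ∈ exponentDvdSubalgebra R p {i}ᶜ)
    (hf' : ∀ i, f i ∉ exponentDvdSubalgebra R p Set.univ) :
    (Matrix.of fun i j => pderiv j (f i)).det ≠ 0 := by
  obtain ⟨a, ha, hdiag, huniq⟩ := exists_unique_sum_decomposition hf hf'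
  have hE : (Matrix.of fun i j => X j * pderiv j (f i))
      = (Matrix.of fun i j => pderiv j (f i)) * Matrix.diagonal X := by
    ext i j
    simp [mul_comm]
  intro h0
  have hcoeff := coeff_sum_det_X_mul_pderiv huniq
  rw [hE, Matrix.det_mul, h0, zero_mul, coeff_zero] at hcoeff
  refine mul_ne_zero (Finset.prod_ne_zero_iff.mpr fun i _ => mem_support_iff.mp (ha i))
    (Matrix.det_of_natCast_ne_zero hp hR _ (fun i j hij => hf i _ (ha i) j (Ne.symm hij)) hdiag)
    hcoeff.symm

theorem aeval_pderiv_eq_zero_of_det_ne_zero [DecidableEq σ] [IsDomain R]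
    {f : σ → MvPolynomial σ R} (hdet : (Matrix.of fun i j => pderiv j (f i)).det ≠ 0)
    {P : MvPolynomial σ R} (hP : aeval f P = 0) (k : σ) : aeval f (pderiv k P) = 0 := by
  by_contra hk
  refine hdet (Matrix.exists_vecMul_eq_zero_iff.mp
    ⟨fun k => aeval f (pderiv k P), fun h => hk (congrFun h k), ?_⟩)
  funext j
  have hchain := (pderiv j).map_mvPolynomial_aeval f P
  rw [hP, map_zero] at hchain
  simpa [Matrix.vecMul, dotProduct] using hchain.symm

end Jacobian

theorem totalDegree_pderiv_lt [IsDomain R] {k : σ} {P : MvPolynomial σ R}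
    (h : pderiv k P ≠ 0) : (pderiv k P).totalDegree < P.totalDegree :=
  calc (pderiv k P).totalDegree < (X k * pderiv k P).totalDegree := by
        rw [totalDegree_mul_of_isDomain (X_ne_zero k) h, totalDegree_X]
        omega
    _ ≤ P.totalDegree := totalDegree_le_of_support_subset (support_X_mul_pderiv_subset k P)

theorem totalDegree_pow_of_isDomain [IsDomain R] (P : MvPolynomial σ R) (n : ℕ) :
    (P ^ n).totalDegree = n * P.totalDegree := by
  rcases eq_or_ne P 0 with rfl | hP
  · cases n <;> simp
  induction n with
  | zero => simp
  | succ n ih =>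
    rw [pow_succ, totalDegree_mul_of_isDomain (pow_ne_zero n hP) hP, ih]
    ring

theorem natCast_apply_eq_zero_of_pderiv_eq_zero [NoZeroDivisors R] {k : σ}
    {P : MvPolynomial σ R} (h : pderiv k P = 0) {m : σ →₀ ℕ} (hm : m ∈ P.support) :
    (m k : R) = 0 := by
  have hcoeff := coeff_X_mul_pderiv k P m
  rw [h, mul_zero, coeff_zero] at hcoeff
  exact (mul_eq_zero.mp hcoeff.symm).resolve_right (mem_support_iff.mp hm)

theorem totalDegree_eq_zero_of_forall_pderiv_eq_zero [CharZero R] [NoZeroDivisors R]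
    {P : MvPolynomial σ R} (h : ∀ k, pderiv k P = 0) : P.totalDegree = 0 :=
  (totalDegree_eq_zero_iff (p := P)).mpr fun _ hm k =>
    Nat.cast_eq_zero.mp (natCast_apply_eq_zero_of_pderiv_eq_zero (h k) hm)

theorem exists_pow_eq_of_forall_pderiv_eq_zero {L : Type*} [Field L] (q : ℕ) [Fact q.Prime]
    [CharP L q] [PerfectRing L q] {P : MvPolynomial σ L} (h : ∀ k, pderiv k P = 0) :
    ∃ Q, Q ^ q = P := by
  have hP : P ∈ Algebra.adjoin L (Set.range fun j : σ => (X j : MvPolynomial σ L) ^ q) :=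
    exponentDvdSubalgebra_univ_le q fun m hm k _ =>
      (CharP.cast_eq_zero_iff L q _).mp (natCast_apply_eq_zero_of_pderiv_eq_zero (h k) hm)
  rw [Algebra.adjoin_range_eq_range_aeval] at hP
  obtain ⟨P₀, rfl⟩ := hP
  refine ⟨map (frobeniusEquiv L q).symm P₀, ?_⟩
  rw [← map_frobenius_expand, ← map_expand, map_map, frobenius_comp_frobeniusEquiv_symm, map_id]
  rfl

end MvPolynomial

theorem algebraicIndependent_of_det_jacobian_ne_zero_of_perfectField {σ L : Type*} [Fintype σ]
    [DecidableEq σ] [Field L] [PerfectField L] {f : σ → MvPolynomial σ L}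
    (hdet : (Matrix.of fun i j => pderiv j (f i)).det ≠ 0) : AlgebraicIndependent L f := by
  rw [algebraicIndependent_iff]
  intro P hP
  induction hd : P.totalDegree using Nat.strong_induction_on generalizing P with
  | _ d ih =>
  have hconst {Q : MvPolynomial σ L} (hQ : Q.totalDegree = 0) (hQf : aeval f Q = 0) : Q = 0 := by
    rw [totalDegree_eq_zero_iff_eq_C] at hQ
    rw [hQ, aeval_C, map_eq_zero] at hQf
    rw [hQ, hQf, C_0]
  have hpd (k : σ) : pderiv k P = 0 := by
    by_contra hk
    exact hk (ih _ (hd ▸ totalDegree_pderiv_lt hk) _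
      (aeval_pderiv_eq_zero_of_det_ne_zero hdet hP k) rfl)
  obtain ⟨q, hq⟩ := ExpChar.exists L
  rcases hq with _ | ⟨hq⟩
  · exact hconst (totalDegree_eq_zero_of_forall_pderiv_eq_zero hpd) hP
  have := Fact.mk hq
  obtain ⟨Q, rfl⟩ := exists_pow_eq_of_forall_pderiv_eq_zero q hpd
  have hQf : aeval f Q = 0 := (pow_eq_zero_iff hq.ne_zero).mp (by rw [← map_pow, hP])
  suffices Q = 0 by rw [this, zero_pow hq.ne_zero]
  rcases Nat.eq_zero_or_pos Q.totalDegree with h0 | hpos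
  · exact hconst h0 hQf
  · refine ih _ ?_ _ hQf rfl
    rw [← hd, totalDegree_pow_of_isDomain]
    nlinarith [hq.two_le]

theorem algebraicIndependent_of_det_jacobian_ne_zero {σ K : Type*} [Fintype σ]
    [DecidableEq σ] [Field K] {f : σ → MvPolynomial σ K}
    (hdet : (Matrix.of fun i j => pderiv j (f i)).det ≠ 0) : AlgebraicIndependent K f := by
  let L := AlgebraicClosure K
  let φ : MvPolynomial σ K →+* MvPolynomial σ L := map (algebraMap K L)
  have hφ : Function.Injective φ := map_injective _ (algebraMap K L).injective
  have hdet' : (Matrix.of fun i j => pderiv j (φ (f i))).det ≠ 0 := by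
    have hJ : (Matrix.of fun i j => pderiv j (φ (f i)))
        = φ.mapMatrix (Matrix.of fun i j => pderiv j (f i)) := by
      ext i j
      simp [φ, pderiv_map]
    rw [hJ, ← RingHom.map_det, Ne, map_eq_zero_iff φ hφ]
    exact hdet
  exact (algebraicIndependent_of_det_jacobian_ne_zero_of_perfectField hdet').of_ringHom_of_comp_eq
    (algebraMap K L) φ (algebraMap K L).injective (by ext; simp [φ])

/-- Let `p` be a prime and `K` a field of characteristic `0` or `p`.
If each `fᵢ ∈ K[x₁,…,xₙ]` lies in `K[x₁ᵖ,…,x_{i-1}ᵖ, xᵢ, x_{i+1}ᵖ,…,xₙᵖ]` but not in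
`K[x₁ᵖ,…,xₙᵖ]`, then the Jacobian determinant `det (∂fᵢ/∂xⱼ)` is nonzero; in particular
`f₁,…,fₙ` are algebraically independent over `K`. -/
theorem jacobian_ne_zero_of_p_power_form (K : Type) [Field K] (p : ℕ) (hp : p.Prime)
    (hchar : ringChar K = 0 ∨ ringChar K = p)
    (n : ℕ) (f : Fin n → MvPolynomial (Fin n) K)
    (hmem : ∀ i, f i ∈ Algebra.adjoin K
      ({MvPolynomial.X i} ∪
        {q : MvPolynomial (Fin n) K | ∃ j, j ≠ i ∧ q = MvPolynomial.X j ^ p}))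
    (hnot : ∀ i, f i ∉ Algebra.adjoin K
      (Set.range fun j : Fin n => (MvPolynomial.X j : MvPolynomial (Fin n) K) ^ p)) :
    (Matrix.of fun i j : Fin n => MvPolynomial.pderiv j (f i)).det ≠ 0 ∧
    AlgebraicIndependent K f := by
  have hpchar : p ∣ ringChar K := by rcases hchar with h | h <;> simp [h]
  have hdet := det_jacobian_ne_zero hp hpchar (fun i => adjoin_X_union_X_pow_le p i (hmem i))
    (fun i h => hnot i (exponentDvdSubalgebra_univ_le p h))
  exact ⟨hdet, algebraicIndependent_of_det_jacobian_ne_zero hdet⟩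
end

section
/- Let W = W₁ ⊕ ⋯ ⊕ W_r be a faithful G-module with each W_i an irreducible G-module, and let φ = (φ₁, …, φ_r): V → W be a covariant, with components φ_i: V → W_i. If φ_i ≠ 0 for all i = 1, …, r, then φ is faithful. -/
/-!
The span of the image of `φᵢ` is a `G`-stable subspace of `Wᵢ`, nonzero because `φᵢ ≠ 0`, hence all
of `Wᵢ` by irreducibility. An element fixing the image of `φ` pointwise therefore acts trivially on
every `Wᵢ`, so it is trivial because `W` is faithful.
-/

open MvPolynomial

noncomputable section

/-- The evaluation map `ℂⁿ → ℂᵐ` of an `m`-tuple of polynomials in `n` variables. -/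
def polyMap {n m : ℕ} (p : Fin m → MvPolynomial (Fin n) ℂ) :
    (Fin n → ℂ) → Fin m → ℂ :=
  fun x i => MvPolynomial.eval x (p i)

/-- The linear action of `g : G` on `ℂᵐ` coming from a matrix representation `ρ`. -/
def matAct {G : Type*} [Group G] {m : ℕ} (ρ : G →* Matrix.GeneralLinearGroup (Fin m) ℂ)
    (g : G) (x : Fin m → ℂ) : Fin m → ℂ :=
  Matrix.mulVec (ρ g : Matrix (Fin m) (Fin m) ℂ) x

/-- Equivariance of a map `ℂⁿ → ℂᵐ` with respect to representations `ρV`, `ρW`. -/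
def IsEquivariant {G : Type*} [Group G] {n m : ℕ}
    (ρV : G →* Matrix.GeneralLinearGroup (Fin n) ℂ)
    (ρW : G →* Matrix.GeneralLinearGroup (Fin m) ℂ)
    (F : (Fin n → ℂ) → Fin m → ℂ) : Prop :=
  ∀ (g : G) (x : Fin n → ℂ), F (matAct ρV g x) = matAct ρW g (F x)

/-- `G` acts faithfully on the image of `F` (equivalently, on its Zariski closure). -/
def IsFaithfulOnImage {G : Type*} [Group G] {n m : ℕ}
    (ρW : G →* Matrix.GeneralLinearGroup (Fin m) ℂ)
    (F : (Fin n → ℂ) → Fin m → ℂ) : Prop :=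
  ∀ g : G, (∀ x : Fin n → ℂ, matAct ρW g (F x) = F x) → g = 1

/-- Dimension of the Zariski closure of a subset of `ℂᵐ`, as the Krull dimension of its
affine coordinate ring. -/
def zdim {m : ℕ} (S : Set (Fin m → ℂ)) : WithBot ℕ∞ :=
  ringKrullDim (MvPolynomial (Fin m) ℂ ⧸ MvPolynomial.vanishingIdeal ℂ S)

/-- The covariant dimension of a group `G`: the minimal dimension of the (closure of the)
image of a faithful polynomial covariant `φ : V → W` between `G`-modules. -/
def covdim (G : Type*) [Group G] : WithBot ℕ∞ :=
  sInf { d : WithBot ℕ∞ | ∃ (n m : ℕ)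
    (ρV : G →* Matrix.GeneralLinearGroup (Fin n) ℂ)
    (ρW : G →* Matrix.GeneralLinearGroup (Fin m) ℂ)
    (p : Fin m → MvPolynomial (Fin n) ℂ),
    IsEquivariant ρV ρW (polyMap p) ∧ IsFaithfulOnImage ρW (polyMap p) ∧
    d = zdim (Set.range (polyMap p)) }

/-- The rational map `ℂⁿ ⇢ ℂᵐ` with components `pᵢ / q`. -/
def ratMap {n m : ℕ} (p : Fin m → MvPolynomial (Fin n) ℂ) (q : MvPolynomial (Fin n) ℂ) :
    (Fin n → ℂ) → Fin m → ℂ :=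
  fun x i => MvPolynomial.eval x (p i) / MvPolynomial.eval x q

/-- The domain of definition of the rational map with denominator `q`. -/
def ratDomain {n : ℕ} (q : MvPolynomial (Fin n) ℂ) : Set (Fin n → ℂ) :=
  {x | MvPolynomial.eval x q ≠ 0}

/-- The essential dimension of a group `G`: the minimal dimension of the (closure of the)
image of a faithful rational covariant `φ : V ⇢ W` between `G`-modules. -/
def edim (G : Type*) [Group G] : WithBot ℕ∞ :=
  sInf { d : WithBot ℕ∞ | ∃ (n m : ℕ)
    (ρV : G →* Matrix.GeneralLinearGroup (Fin n) ℂ)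
    (ρW : G →* Matrix.GeneralLinearGroup (Fin m) ℂ)
    (p : Fin m → MvPolynomial (Fin n) ℂ) (q : MvPolynomial (Fin n) ℂ),
    q ≠ 0 ∧
    (∀ (g : G), ∀ x ∈ ratDomain q, matAct ρV g x ∈ ratDomain q →
      ratMap p q (matAct ρV g x) = matAct ρW g (ratMap p q x)) ∧
    (∀ g : G, (∀ x ∈ ratDomain q, matAct ρW g (ratMap p q x) = ratMap p q x) → g = 1) ∧
    d = zdim (ratMap p q '' ratDomain q) }

/-- Irreducibility of a matrix representation: the only invariant subspaces are `0` and
the whole space. -/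
def IsIrreducibleRep {G : Type*} [Group G] {m : ℕ}
    (ρ : G →* Matrix.GeneralLinearGroup (Fin m) ℂ) : Prop :=
  ∀ U : Submodule ℂ (Fin m → ℂ), (∀ g : G, ∀ x ∈ U, matAct ρ g x ∈ U) → U = ⊥ ∨ U = ⊤

/-- A group is faithful if it admits a faithful irreducible complex representation. -/
def IsFaithfulGroup (G : Type*) [Group G] : Prop :=
  ∃ (m : ℕ) (ρ : G →* Matrix.GeneralLinearGroup (Fin m) ℂ),
    0 < m ∧ Function.Injective ρ ∧ IsIrreducibleRep ρ

/-- `z_G(V)`: the number of scalar matrices contained in the image of `ρ`. -/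
def zscalar {G : Type*} [Group G] {m : ℕ}
    (ρ : G →* Matrix.GeneralLinearGroup (Fin m) ℂ) : ℕ :=
  Nat.card {M : Matrix (Fin m) (Fin m) ℂ //
    (∃ g : G, (ρ g : Matrix (Fin m) (Fin m) ℂ) = M) ∧
    ∃ c : ℂ, M = c • (1 : Matrix (Fin m) (Fin m) ℂ)}

section

variable {G : Type*} [Group G] {n m : ℕ}

theorem matAct_mem_span_range_of_isEquivariant {ρV : G →* Matrix.GeneralLinearGroup (Fin n) ℂ}
    {ρW : G →* Matrix.GeneralLinearGroup (Fin m) ℂ} {F : (Fin n → ℂ) → Fin m → ℂ}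
    (hF : IsEquivariant ρV ρW F) (g : G) {w : Fin m → ℂ}
    (hw : w ∈ Submodule.span ℂ (Set.range F)) :
    matAct ρW g w ∈ Submodule.span ℂ (Set.range F) := by
  refine Submodule.span_mono ?_
    (Submodule.apply_mem_span_image_of_mem_span (Matrix.toLin' (ρW g).val) hw)
  rintro _ ⟨_, ⟨x, rfl⟩, rfl⟩
  exact ⟨matAct ρV g x, hF g x⟩

theorem span_range_eq_top_of_isIrreducibleRep {ρV : G →* Matrix.GeneralLinearGroup (Fin n) ℂ}
    {ρW : G →* Matrix.GeneralLinearGroup (Fin m) ℂ} {F : (Fin n → ℂ) → Fin m → ℂ}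
    (hirr : IsIrreducibleRep ρW) (hF : IsEquivariant ρV ρW F) (hne : ∃ x, F x ≠ 0) :
    Submodule.span ℂ (Set.range F) = ⊤ := by
  refine (hirr _ fun g _ => matAct_mem_span_range_of_isEquivariant hF g).resolve_left ?_
  obtain ⟨x, hx⟩ := hne
  rw [Submodule.span_eq_bot]
  exact fun h => hx (h _ ⟨x, rfl⟩)

theorem eq_one_of_matAct_eq_self_of_span_eq_top {ρ : G →* Matrix.GeneralLinearGroup (Fin m) ℂ}
    {g : G} {S : Set (Fin m → ℂ)} (hS : Submodule.span ℂ S = ⊤)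
    (hg : ∀ w ∈ S, matAct ρ g w = w) : ρ g = 1 := by
  have hlin : Matrix.toLin' (ρ g).val = Matrix.toLin' 1 := by
    refine LinearMap.ext_on hS fun w hw => ?_
    rw [Matrix.toLin'_one, Matrix.toLin'_apply]
    exact hg w hw
  exact Units.ext (Matrix.toLin'.injective hlin)

end

theorem faithful_of_components_ne_zero_general (G : Type) [Group G] (n r : ℕ)
    (m : Fin r → ℕ)
    (ρV : G →* Matrix.GeneralLinearGroup (Fin n) ℂ)
    (ρW : (i : Fin r) → G →* Matrix.GeneralLinearGroup (Fin (m i)) ℂ)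
    (hWfaithful : ∀ g : G, (∀ i, ρW i g = 1) → g = 1)
    (hirr : ∀ i, IsIrreducibleRep (ρW i))
    (p : (i : Fin r) → Fin (m i) → MvPolynomial (Fin n) ℂ)
    (hequiv : ∀ i, IsEquivariant ρV (ρW i) (polyMap (p i)))
    (hne : ∀ i, ∃ x : Fin n → ℂ, polyMap (p i) x ≠ 0) :
    ∀ g : G, (∀ (i : Fin r) (x : Fin n → ℂ),
      matAct (ρW i) g (polyMap (p i) x) = polyMap (p i) x) → g = 1 := by
  intro g hg
  refine hWfaithful g fun i => ?_
  refine eq_one_of_matAct_eq_self_of_span_eq_top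
    (span_range_eq_top_of_isIrreducibleRep (hirr i) (hequiv i) (hne i)) ?_
  rintro _ ⟨x, rfl⟩
  exact hg i x

/-- Let `W = W₁ ⊕ ⋯ ⊕ W_r` be a faithful `G`-module with each `Wᵢ`
irreducible and let `φ = (φ₁,…,φ_r) : V → W` be a covariant. If `φᵢ ≠ 0` for all `i`,
then `φ` is faithful (no nontrivial `g` fixes all points of the image of `φ`). -/
theorem faithful_of_components_ne_zero (G : Type) [Group G] [Finite G] (n r : ℕ)
    (m : Fin r → ℕ)
    (ρV : G →* Matrix.GeneralLinearGroup (Fin n) ℂ)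
    (ρW : (i : Fin r) → G →* Matrix.GeneralLinearGroup (Fin (m i)) ℂ)
    (hWfaithful : ∀ g : G, (∀ i, ρW i g = 1) → g = 1)
    (hirr : ∀ i, IsIrreducibleRep (ρW i))
    (p : (i : Fin r) → Fin (m i) → MvPolynomial (Fin n) ℂ)
    (hequiv : ∀ i, IsEquivariant ρV (ρW i) (polyMap (p i)))
    (hne : ∀ i, ∃ x : Fin n → ℂ, polyMap (p i) x ≠ 0) :
    ∀ g : G, (∀ (i : Fin r) (x : Fin n → ℂ),
      matAct (ρW i) g (polyMap (p i) x) = polyMap (p i) x) → g = 1 :=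
  faithful_of_components_ne_zero_general G n r m ρV ρW hWfaithful hirr p hequiv hne

end
end

section
/- Let V be a G-module and φ: V → V a nonzero homogeneous covariant of degree d. Then d ≡ 1 (mod z_G(V)). Consequently, every nonzero homogeneous component of any covariant φ: V → V has degree ≡ 1 (mod z_G(V)). -/
open MvPolynomial

noncomputable section

/-!
If `ρ g = c • 1`, equivariance gives `φ (c • x) = c • φ x`, whereas substituting `c • x`
multiplies the degree-`j` component of `φ` by `c ^ j`; hence `c ^ j = c` for every scalar `c` in
the image of `ρ`. These scalars form a finite subgroup of `ℂˣ`, which is cyclic of order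
`z_G(V)`, and `c ^ j = c` for a generator `c` means `j ≡ 1 (mod z_G(V))`.
-/

section Scaling

variable {σ R : Type*}

lemma coeff_bind₁_C_mul_X [CommSemiring R] (c : R) (P : MvPolynomial σ R) (m : σ →₀ ℕ) :
    coeff m (bind₁ (fun k => C c * X k) P) = c ^ m.degree * coeff m P := by
  induction P using MvPolynomial.induction_on' with
  | add p q hp hq => simp only [map_add, coeff_add, hp, hq, mul_add]
  | monomial d a =>
    have hmon : bind₁ (fun k => C c * X k) (monomial d a) = monomial d (c ^ d.degree * a) := by
      rw [bind₁_monomial, monomial_eq, C_mul, Finsupp.prod]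
      simp_rw [mul_pow, Finset.prod_mul_distrib, ← C_pow, ← map_prod,
        Finset.prod_pow_eq_pow_sum, Finsupp.degree_apply]
      ring
    classical
    rw [hmon, coeff_monomial, coeff_monomial]
    split_ifs with h
    · rw [h]
    · rw [mul_zero]

lemma pow_eq_self_of_eval_smul [CommRing R] [IsDomain R] [Infinite R] {c : R}
    {P : MvPolynomial σ R} (hP : ∀ x, eval (c • x) P = c * eval x P) {j : ℕ}
    (hj : homogeneousComponent j P ≠ 0) : c ^ j = c := by
  have hbind : bind₁ (fun k => C c * X k) P = C c * P := MvPolynomial.funext fun x => by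
    rw [map_mul, eval_C, ← hP x]
    exact (eval₂Hom_bind₁ (RingHom.id R) x _ P).trans (by simp [Pi.smul_def])
  obtain ⟨m, hm⟩ := support_nonempty.mpr hj
  rw [mem_support_iff, coeff_homogeneousComponent] at hm
  split_ifs at hm with hdeg
  · have := congrArg (coeff m) hbind
    rw [coeff_bind₁_C_mul_X, coeff_C_mul, hdeg] at this
    exact mul_right_cancel₀ hm this
  · exact absurd rfl hm

end Scaling

lemma IsCyclic.modEq_one_of_forall_pow_eq_self {α : Type*} [Group α] [IsCyclic α] [Finite α]
    {j : ℕ} (h : ∀ a : α, a ^ j = a) : j ≡ 1 [MOD Nat.card α] := by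
  obtain ⟨ζ, hζ⟩ := IsCyclic.exists_generator (α := α)
  rw [← orderOf_eq_card_of_forall_mem_zpowers hζ, ← pow_eq_pow_iff_modEq, pow_one]
  exact h ζ

section ScalarUnits

variable {G : Type*} [Group G] {n : ℕ} (ρ : G →* Matrix.GeneralLinearGroup (Fin n) ℂ)

def scalarUnits : Subgroup ℂˣ :=
  ρ.range.comap (Units.map (algebraMap ℂ (Matrix (Fin n) (Fin n) ℂ)))

variable {ρ}

lemma mem_scalarUnits {c : ℂˣ} :
    c ∈ scalarUnits ρ ↔ ∃ g, (ρ g : Matrix (Fin n) (Fin n) ℂ) = (c : ℂ) • 1 := by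
  simp only [scalarUnits, Subgroup.mem_comap, MonoidHom.mem_range, Units.ext_iff,
    Units.coe_map, MonoidHom.coe_coe, Algebra.algebraMap_eq_smul_one]

lemma IsEquivariant.map_smul_of_mem_scalarUnits {F : (Fin n → ℂ) → Fin n → ℂ}
    (hF : IsEquivariant ρ ρ F) {c : ℂˣ} (hc : c ∈ scalarUnits ρ) (x : Fin n → ℂ) :
    F ((c : ℂ) • x) = (c : ℂ) • F x := by
  obtain ⟨g, hg⟩ := mem_scalarUnits.mp hc
  simpa only [matAct, hg, Matrix.smul_mulVec, Matrix.one_mulVec] using hF g x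

variable [Nonempty (Fin n)]

instance [Finite G] : Finite (scalarUnits ρ) :=
  Finite.of_injective (fun c : scalarUnits ρ => (⟨_, c.2⟩ : Set.range ρ))
    fun _ _ hab => Subtype.ext <| Units.map_injective (algebraMap ℂ _).injective
      (congrArg Subtype.val hab)

lemma natCard_scalarUnits : Nat.card (scalarUnits ρ) = zscalar ρ := by
  refine Nat.card_eq_of_bijective (fun c : scalarUnits ρ =>
    ⟨((c : ℂˣ) : ℂ) • 1, (mem_scalarUnits.mp c.2).imp fun _ => id, _, rfl⟩) ⟨?_, ?_⟩
  · exact fun a b hab => Subtype.ext <| Units.ext <|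
      smul_left_injective ℂ one_ne_zero (congrArg Subtype.val hab)
  · rintro ⟨_, ⟨g, rfl⟩, c, hc⟩
    have hc0 : c ≠ 0 := left_ne_zero_of_smul (hc ▸ (ρ g).ne_zero)
    exact ⟨⟨Units.mk0 c hc0, mem_scalarUnits.mpr ⟨g, hc⟩⟩, Subtype.ext hc.symm⟩

end ScalarUnits

/-- If `φ : V → V` is a nonzero homogeneous covariant of degree `d`,
then `d ≡ 1 (mod z_G(V))`; consequently every nonzero homogeneous component of any
covariant `φ : V → V` has degree `≡ 1 (mod z_G(V))`. -/
theorem degree_covariant_mod_zscalar (G : Type) [Group G] [Finite G] (n : ℕ)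
    (ρ : G →* Matrix.GeneralLinearGroup (Fin n) ℂ)
    (p : Fin n → MvPolynomial (Fin n) ℂ)
    (hequiv : IsEquivariant ρ ρ (polyMap p)) :
    (∀ d : ℕ, (∀ i, (p i).IsHomogeneous d) → (∃ i, p i ≠ 0) →
      d ≡ 1 [MOD zscalar ρ]) ∧
    (∀ j : ℕ, (∃ i, MvPolynomial.homogeneousComponent j (p i) ≠ 0) →
      j ≡ 1 [MOD zscalar ρ]) := by
  have component : ∀ j : ℕ, (∃ i, homogeneousComponent j (p i) ≠ 0) →
      j ≡ 1 [MOD zscalar ρ] := by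
    rintro j ⟨i, hi⟩
    have : Nonempty (Fin n) := ⟨i⟩
    rw [← natCard_scalarUnits]
    refine IsCyclic.modEq_one_of_forall_pow_eq_self fun c => Subtype.ext <| Units.ext ?_
    refine pow_eq_self_of_eval_smul (fun x => ?_) hi
    exact congrFun (hequiv.map_smul_of_mem_scalarUnits c.2 x) i
  refine ⟨fun d hd ⟨i, hi⟩ => component d ⟨i, ?_⟩, component⟩
  rwa [homogeneousComponent_eq_self (hd i)]

end
end

section
/- Let d, d₁, d₂, a₁, a₂ be natural numbers with d ≥ 1, d | d₁, d₁ | d₂, and such that every prime dividing d₂ also divides d (equivalently d₂ | d^N for N large). Then the equation (1 + a₁d)(1 + x·d₁) = (1 + a₂d)(1 + y·d₂) has a solution x, y ∈ ℕ if and only if a₁ ≡ a₂ (mod d₁/d). Moreover, when a solution exists, x and y can be chosen to be arbitrarily large. -/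
/-!
Write `A = 1 + a₁ d` and `B = 1 + a₂ d`. Reducing the equation modulo `d₁` shows that it forces
`A ≡ B [MOD d₁]`, which is the congruence `a₁ ≡ a₂ [MOD d₁ / d]`. Conversely, every prime factor
of `d₂` divides `d`, hence not `A`, so `d₂` is invertible modulo `A` and there are arbitrarily
large `y` with `1 + y d₂ = A t`. Then `B t ≡ A t = 1 + y d₂ ≡ 1 [MOD d₁]`, so `B t = 1 + x d₁`,
and `A (1 + x d₁) = B (1 + y d₂)`.
-/

namespace Nat

theorem modEq_div_iff_mul_modEq {a b c n : ℕ} (hc : c ≠ 0) (hcn : c ∣ n) :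
    a ≡ b [MOD n / c] ↔ a * c ≡ b * c [MOD n] := by
  conv_rhs => rw [← Nat.div_mul_cancel hcn]
  exact ⟨ModEq.mul_right' c, ModEq.mul_right_cancel' hc⟩

theorem one_add_mul_modEq_one {m n : ℕ} (y : ℕ) (h : n ∣ m) : 1 + y * m ≡ 1 [MOD n] :=
  (modEq_zero_iff_dvd.2 (h.mul_left y)).add_left 1

theorem coprime_one_add_mul_of_forall_prime_dvd {m d : ℕ} (a : ℕ)
    (h : ∀ q : ℕ, q.Prime → q ∣ m → q ∣ d) : Coprime m (1 + a * d) :=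
  coprime_of_dvd' fun q hq hqm hqA =>
    (Nat.dvd_add_left ((h q hq hqm).mul_left a)).1 hqA

theorem exists_ge_dvd_one_add_mul {m n : ℕ} (hn : n ≠ 0) (h : Coprime m n) (N : ℕ) :
    ∃ y, N ≤ y ∧ n ∣ 1 + y * m := by
  have : NeZero n := ⟨hn⟩
  set u := ZMod.unitOfCoprime m h
  have hu : (u : ZMod n) = m := ZMod.coe_unitOfCoprime m h
  refine ⟨N * n + ((-u⁻¹ : (ZMod n)ˣ) : ZMod n).val, ?_, ?_⟩
  · nlinarith [Nat.one_le_iff_ne_zero.2 hn]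
  · rw [← ZMod.natCast_eq_zero_iff]
    push_cast
    rw [ZMod.natCast_zmod_val, ZMod.natCast_self, ← hu]
    simp

theorem exists_eq_one_add_mul_of_modEq_one {c n N : ℕ} (hn : 0 < n) (hc : 1 + N * n ≤ c)
    (h : c ≡ 1 [MOD n]) : ∃ x, N ≤ x ∧ c = 1 + x * n := by
  obtain ⟨x, hx⟩ := (modEq_iff_dvd' (by omega)).1 h.symm
  refine ⟨x, ?_, by rw [mul_comm]; omega⟩
  exact le_of_mul_le_mul_right (by rw [mul_comm x]; omega) hn

end Nat

theorem modEq_of_mul_one_add_mul_eq {A B d₁ d₂ x y : ℕ} (hd₁d₂ : d₁ ∣ d₂)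
    (h : A * (1 + x * d₁) = B * (1 + y * d₂)) : A ≡ B [MOD d₁] :=
  calc A = A * 1 := (mul_one A).symm
    _ ≡ A * (1 + x * d₁) [MOD d₁] := ((Nat.one_add_mul_modEq_one x dvd_rfl).mul_left A).symm
    _ = B * (1 + y * d₂) := h
    _ ≡ B * 1 [MOD d₁] := (Nat.one_add_mul_modEq_one y hd₁d₂).mul_left B
    _ = B := mul_one B

theorem exists_ge_mul_one_add_mul_eq {A B d₁ d₂ : ℕ} (hA : 0 < A) (hB : 0 < B)
    (hd₁d₂ : d₁ ∣ d₂) (hd₂ : 0 < d₂) (hcop : d₂.Coprime A) (hAB : A ≡ B [MOD d₁]) (N : ℕ) :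
    ∃ x y, N ≤ x ∧ N ≤ y ∧ A * (1 + x * d₁) = B * (1 + y * d₂) := by
  obtain ⟨y, hNy, t, ht⟩ := Nat.exists_ge_dvd_one_add_mul hA.ne' hcop (A * (1 + N * d₁) + N)
  have ht_large : 1 + N * d₁ ≤ B * t := by
    have : A * (1 + N * d₁) < A * t := by nlinarith
    nlinarith [Nat.lt_of_mul_lt_mul_left this]
  have hBt : B * t ≡ 1 [MOD d₁] :=
    calc B * t ≡ A * t [MOD d₁] := (hAB.mul_right t).symm
      _ = 1 + y * d₂ := ht.symm
      _ ≡ 1 [MOD d₁] := Nat.one_add_mul_modEq_one y hd₁d₂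
  obtain ⟨x, hNx, hx⟩ :=
    Nat.exists_eq_one_add_mul_of_modEq_one (Nat.pos_of_dvd_of_pos hd₁d₂ hd₂) ht_large hBt
  refine ⟨x, y, hNx, by omega, ?_⟩
  rw [← hx, ht]
  ring

/-- Let `d, d₁, d₂, a₁, a₂ ∈ ℕ` with `d ≥ 1`, `d ∣ d₁ ∣ d₂`, and every
prime dividing `d₂` divides `d`. Then `(1 + a₁d)(1 + x d₁) = (1 + a₂d)(1 + y d₂)` has a
solution `x, y ∈ ℕ` iff `a₁ ≡ a₂ (mod d₁/d)`; moreover, in that case `x` and `y` can be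
chosen arbitrarily large. -/
theorem solvable_iff_congruent (d d₁ d₂ a₁ a₂ : ℕ) (hd : 1 ≤ d)
    (hdd₁ : d ∣ d₁) (hd₁d₂ : d₁ ∣ d₂)
    (hprimes : ∀ q : ℕ, q.Prime → q ∣ d₂ → q ∣ d) :
    ((∃ x y : ℕ, (1 + a₁ * d) * (1 + x * d₁) = (1 + a₂ * d) * (1 + y * d₂)) ↔
      a₁ ≡ a₂ [MOD d₁ / d]) ∧
    (a₁ ≡ a₂ [MOD d₁ / d] → ∀ N : ℕ, ∃ x y : ℕ, N ≤ x ∧ N ≤ y ∧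
      (1 + a₁ * d) * (1 + x * d₁) = (1 + a₂ * d) * (1 + y * d₂)) := by
  have hcong : a₁ ≡ a₂ [MOD d₁ / d] ↔ 1 + a₁ * d ≡ 1 + a₂ * d [MOD d₁] :=
    (Nat.modEq_div_iff_mul_modEq (by omega) hdd₁).trans
      ⟨Nat.ModEq.add_left 1, Nat.ModEq.add_left_cancel' 1⟩
  have hd₂ : 0 < d₂ := by
    obtain ⟨p, hdp, hp⟩ := Nat.exists_infinite_primes (d + 1)
    by_contra! h0
    have := Nat.le_of_dvd hd (hprimes p hp (Nat.le_zero.1 h0 ▸ dvd_zero p))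
    omega
  have large (h : a₁ ≡ a₂ [MOD d₁ / d]) (N : ℕ) :=
    exists_ge_mul_one_add_mul_eq (by omega) (by omega) hd₁d₂ hd₂
      (Nat.coprime_one_add_mul_of_forall_prime_dvd a₁ hprimes) (hcong.1 h) N
  refine ⟨⟨fun ⟨_, _, h⟩ => hcong.2 (modEq_of_mul_one_add_mul_eq hd₁d₂ h), fun h => ?_⟩, large⟩
  obtain ⟨x, y, -, -, h⟩ := large h 0
  exact ⟨x, y, h⟩
end
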